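/- Let s, t ∈ ℂ with |s|² ≥ |t|² + 1. Then for every w ∈ ℂ: ∫_ℂ |K^{(s,t)}(z,w)|·e^{−(|z|²+|w|²)/2}·dA(z) ≤ (2π·√|s|/√(|s|²−|t|²)) · exp( −(|s|²−|t|²−1)·|w|²/(2|s|·(|s|+|t|)) ). In particular, sup_{w∈ℂ} ∫_ℂ |K^{(s,t)}(z,w)|·e^{−(|z|²+|w|²)/2}·dA(z) < ∞, and if |s|² > |t|² + 1 then ∫_ℂ |K^{(s,t)}(z,w)|·e^{−(|z|²+|w|²)/2}·dA(z) → 0 as |w| → ∞. -/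

import Mathlib

open MeasureTheory Real Filter
open scoped ENNReal

/-- Principal branch of the complex square root. -/
noncomputable def csqrt (z : ℂ) : ℂ := z ^ ((1 : ℂ) / 2)

/-- The canonical integral kernel `K^{(s,t)}(z,w)`. -/
noncomputable def Kst (s t z w : ℂ) : ℂ :=
  (csqrt s)⁻¹ *
    Complex.exp ((t * z ^ 2 - (starRingEnd ℂ) t * ((starRingEnd ℂ) w) ^ 2
      + 2 * z * (starRingEnd ℂ) w) / (2 * s))

/-!
The modulus of `K^{(s,t)}(z,w) e^{-(|z|²+|w|²)/2}` is the exponential of a real quadratic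
polynomial in `z`. Rotating `z` by a unimodular `e` with `e² t / s ≥ 0` diagonalises its quadratic
part into `-(|s|-|t|)/(2|s|) x² - (|s|+|t|)/(2|s|) y²`, so the integral is a product of two
one-dimensional Gaussian integrals and can be computed exactly: with `v = |s| e w̄ / s`, so that
`|v| = |w|`, and `D = |s|² - |t|² - 1`, it equals
`2π √|s| / √(|s|² - |t|²) · exp(-D v₁² / (2|s|(|s|-|t|)) - D v₂² / (2|s|(|s|+|t|)))`.
Replacing `|s| - |t|` by `|s| + |t|` gives the bound, whose Gaussian decay in `|w|` gives the rest.
-/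

open ComplexConjugate

lemma integral_exp_neg_mul_sq_add_mul {a : ℝ} (ha : 0 < a) (b : ℝ) :
    ∫ x : ℝ, exp (-a * x ^ 2 + b * x) = √(π / a) * exp (b ^ 2 / (4 * a)) := by
  have hsq (x : ℝ) : -a * x ^ 2 + b * x = -a * (x - b / (2 * a)) ^ 2 + b ^ 2 / (4 * a) := by
    field_simp; ring
  simp_rw [hsq, exp_add, integral_mul_const,
    integral_sub_right_eq_self (fun x => exp (-a * x ^ 2)), integral_gaussian]

lemma integral_exp_quadratic_re_im {a c : ℝ} (ha : 0 < a) (hc : 0 < c) (b d : ℝ) :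
    ∫ z : ℂ, exp (-a * z.re ^ 2 + b * z.re + (-c * z.im ^ 2 + d * z.im))
      = (√(π / a) * exp (b ^ 2 / (4 * a))) * (√(π / c) * exp (d ^ 2 / (4 * c))) := by
  rw [← Complex.volume_preserving_equiv_real_prod.symm.integral_comp',
    Measure.volume_eq_prod, ← integral_exp_neg_mul_sq_add_mul ha,
    ← integral_exp_neg_mul_sq_add_mul hc, ← integral_prod_mul]
  simp [exp_add]

lemma integrable_exp_quadratic_re_im {a c : ℝ} (ha : 0 < a) (hc : 0 < c) (b d : ℝ) :
    Integrable fun z : ℂ => exp (-a * z.re ^ 2 + b * z.re + (-c * z.im ^ 2 + d * z.im)) := by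
  refine Integrable.of_integral_ne_zero ?_
  rw [integral_exp_quadratic_re_im ha hc]
  positivity

open Complex in
lemma exists_circle_sq_mul_eq (s t : ℂ) : ∃ e : Circle,
    (e : ℂ) ^ 2 * t * ‖s‖ = ‖t‖ * s ∧ conj t * s = ‖t‖ * ‖s‖ * (e : ℂ) ^ 2 := by
  set e := Circle.exp ((s.arg - t.arg) / 2)
  have he : (e : ℂ) ^ 2 * cexp (t.arg * I) = cexp (s.arg * I) := by
    rw [Circle.coe_exp, ← Complex.exp_nat_mul, ← Complex.exp_add]; congr 1; push_cast; ring
  have hunit : conj (cexp (t.arg * I)) * cexp (t.arg * I) = 1 := by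
    rw [← Complex.exp_conj, ← Complex.exp_add]; simp
  have hs := (norm_mul_exp_arg_mul_I s).symm
  have ht := (norm_mul_exp_arg_mul_I t).symm
  have htc := congrArg conj ht
  rw [map_mul, conj_ofReal] at htc
  refine ⟨e, ?_, ?_⟩
  · linear_combination (‖s‖ * (e : ℂ) ^ 2) * ht + (‖t‖ * ‖s‖ : ℂ) * he - (‖t‖ : ℂ) * hs
  · linear_combination s * htc + (‖t‖ * conj (cexp (t.arg * I))) * hs
      - (‖t‖ * ‖s‖ * conj (cexp (t.arg * I))) * he + (‖t‖ * ‖s‖ * (e : ℂ) ^ 2) * hunit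

lemma norm_csqrt (z : ℂ) : ‖csqrt z‖ = √‖z‖ := by
  rw [csqrt, show (1 / 2 : ℂ) = ((1 / 2 : ℝ) : ℂ) by norm_num, Complex.norm_cpow_real,
    Real.sqrt_eq_rpow]

lemma norm_Kst (s t z w : ℂ) :
    ‖Kst s t z w‖ = (√‖s‖)⁻¹ *
      exp ((t * z ^ 2 - conj t * conj w ^ 2 + 2 * z * conj w) / (2 * s)).re := by
  rw [Kst, norm_mul, norm_inv, norm_csqrt, Complex.norm_exp]

lemma Kst_exponent_rotate {s t e v w : ℂ} (hs : s ≠ 0)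
    (h₁ : e ^ 2 * t * ‖s‖ = ‖t‖ * s) (h₂ : conj t * s = ‖t‖ * ‖s‖ * e ^ 2)
    (hv : v * s = ‖s‖ * e * conj w) (z : ℂ) :
    (t * (e * z) ^ 2 - conj t * conj w ^ 2 + 2 * (e * z) * conj w) / (2 * s)
      = ‖t‖ * (z ^ 2 - v ^ 2) / (2 * ‖s‖) + v * z / ‖s‖ := by
  have hS : (‖s‖ : ℂ) ≠ 0 := by exact_mod_cast norm_ne_zero_iff.mpr hs
  field_simp
  refine mul_left_cancel₀ hs ?_
  linear_combination (s * z ^ 2) * h₁ - (2 * s * z) * hv - (conj w ^ 2 * ‖s‖) * h₂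
    + (‖t‖ * (v * s + ‖s‖ * e * conj w)) * hv

lemma norm_Kst_rotate_mul_exp {s t e v w : ℂ} (hs : s ≠ 0) (he : ‖e‖ = 1)
    (h₁ : e ^ 2 * t * ‖s‖ = ‖t‖ * s) (h₂ : conj t * s = ‖t‖ * ‖s‖ * e ^ 2)
    (hv : v * s = ‖s‖ * e * conj w) (z : ℂ) :
    ‖Kst s t (e * z) w‖ * exp (-(‖e * z‖ ^ 2 + ‖w‖ ^ 2) / 2)
      = (√‖s‖)⁻¹ *
          exp (-((‖s‖ + ‖t‖) / (2 * ‖s‖)) * v.re ^ 2 - (‖s‖ - ‖t‖) / (2 * ‖s‖) * v.im ^ 2) *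
        exp (-((‖s‖ - ‖t‖) / (2 * ‖s‖)) * z.re ^ 2 + v.re / ‖s‖ * z.re
          + (-((‖s‖ + ‖t‖) / (2 * ‖s‖)) * z.im ^ 2 + -v.im / ‖s‖ * z.im)) := by
  have hS : ‖s‖ ≠ 0 := norm_ne_zero_iff.mpr hs
  have hvw : ‖v‖ = ‖w‖ := by
    have := congrArg norm hv
    rw [norm_mul, norm_mul, norm_mul, he, Complex.norm_conj, Complex.norm_real, norm_norm] at this
    exact mul_right_cancel₀ hS (by linarith)
  have hre : (‖t‖ * (z ^ 2 - v ^ 2) / (2 * ‖s‖) + v * z / ‖s‖ : ℂ).re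
      = ‖t‖ / (2 * ‖s‖) * (z.re ^ 2 - z.im ^ 2 - v.re ^ 2 + v.im ^ 2)
        + (v.re * z.re - v.im * z.im) / ‖s‖ := by
    rw [show (‖t‖ * (z ^ 2 - v ^ 2) / (2 * ‖s‖) + v * z / ‖s‖ : ℂ)
        = ((‖t‖ / (2 * ‖s‖) : ℝ) : ℂ) * (z ^ 2 - v ^ 2) + ((1 / ‖s‖ : ℝ) : ℂ) * (v * z) by
      push_cast; ring]
    simp only [Complex.add_re, Complex.sub_re, sq, Complex.mul_re, Complex.ofReal_re,
      Complex.ofReal_im, zero_mul, sub_zero]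
    ring
  rw [norm_Kst, Kst_exponent_rotate hs h₁ h₂ hv, hre, norm_mul, he, one_mul, ← hvw,
    Complex.sq_norm, Complex.sq_norm, Complex.normSq_apply, Complex.normSq_apply, mul_assoc,
    ← exp_add, mul_assoc, ← exp_add]
  congr 2
  field_simp
  ring

lemma inv_sqrt_mul_gaussian_integrals_eq {S T : ℝ} (hT : 0 ≤ T) (hTS : T < S) (p q : ℝ) :
    (√S)⁻¹ * exp (-((S + T) / (2 * S)) * p ^ 2 - (S - T) / (2 * S) * q ^ 2) *
      ((√(π / ((S - T) / (2 * S))) * exp ((p / S) ^ 2 / (4 * ((S - T) / (2 * S))))) *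
        (√(π / ((S + T) / (2 * S))) * exp ((-q / S) ^ 2 / (4 * ((S + T) / (2 * S))))))
      = 2 * π * √S / √(S ^ 2 - T ^ 2) *
          exp (-(S ^ 2 - T ^ 2 - 1) * p ^ 2 / (2 * S * (S - T))
            - (S ^ 2 - T ^ 2 - 1) * q ^ 2 / (2 * S * (S + T))) := by
  have hS : 0 < S := hT.trans_lt hTS
  have hST : 0 < S - T := by linarith
  have hSpT : 0 < S + T := by linarith
  have hD : S ^ 2 - T ^ 2 ≠ 0 := by nlinarith
  have hsqrt : (√S)⁻¹ * (√(π / ((S - T) / (2 * S))) * √(π / ((S + T) / (2 * S))))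
      = 2 * π * √S / √(S ^ 2 - T ^ 2) := by
    rw [← Real.sqrt_inv, ← Real.sqrt_mul (by positivity), ← Real.sqrt_mul (by positivity),
      show 2 * π * √S = √((2 * π) ^ 2 * S) by
        rw [Real.sqrt_mul (by positivity), Real.sqrt_sq (by positivity)],
      ← Real.sqrt_div (by positivity)]
    congr 1
    field_simp
    ring
  have hexp : -((S + T) / (2 * S)) * p ^ 2 - (S - T) / (2 * S) * q ^ 2
        + ((p / S) ^ 2 / (4 * ((S - T) / (2 * S))) + (-q / S) ^ 2 / (4 * ((S + T) / (2 * S))))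
      = -(S ^ 2 - T ^ 2 - 1) * p ^ 2 / (2 * S * (S - T))
          - (S ^ 2 - T ^ 2 - 1) * q ^ 2 / (2 * S * (S + T)) := by
    field_simp
    ring
  rw [← hsqrt, ← hexp, exp_add, exp_add]
  ring

theorem lintegral_norm_Kst_mul_exp_eq {s t : ℂ} (hts : ‖t‖ < ‖s‖) (w : ℂ) :
    ∃ v : ℂ, ‖v‖ = ‖w‖ ∧
      ∫⁻ z : ℂ, ENNReal.ofReal (‖Kst s t z w‖ * exp (-(‖z‖ ^ 2 + ‖w‖ ^ 2) / 2))
        = ENNReal.ofReal (2 * π * √‖s‖ / √(‖s‖ ^ 2 - ‖t‖ ^ 2) *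
            exp (-(‖s‖ ^ 2 - ‖t‖ ^ 2 - 1) * v.re ^ 2 / (2 * ‖s‖ * (‖s‖ - ‖t‖))
              - (‖s‖ ^ 2 - ‖t‖ ^ 2 - 1) * v.im ^ 2 / (2 * ‖s‖ * (‖s‖ + ‖t‖)))) := by
  have hS : 0 < ‖s‖ := (norm_nonneg t).trans_lt hts
  have hs : s ≠ 0 := norm_pos_iff.mp hS
  obtain ⟨e, h₁, h₂⟩ := exists_circle_sq_mul_eq s t
  set v : ℂ := ‖s‖ * e * conj w / s
  have hv : v * s = ‖s‖ * e * conj w := div_mul_cancel₀ _ hs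
  refine ⟨v, by simp [v, Circle.norm_coe, hS.ne'], ?_⟩
  have ha : 0 < (‖s‖ - ‖t‖) / (2 * ‖s‖) := by have := sub_pos.mpr hts; positivity
  have hc : 0 < (‖s‖ + ‖t‖) / (2 * ‖s‖) := by positivity
  calc ∫⁻ z : ℂ, ENNReal.ofReal (‖Kst s t z w‖ * exp (-(‖z‖ ^ 2 + ‖w‖ ^ 2) / 2))
      = ∫⁻ z : ℂ, ENNReal.ofReal (‖Kst s t (e * z) w‖ * exp (-(‖e * z‖ ^ 2 + ‖w‖ ^ 2) / 2)) :=
        ((rotation e).measurePreserving.lintegral_comp_emb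
          (rotation e).toHomeomorph.measurableEmbedding _).symm
    _ = ENNReal.ofReal (∫ z : ℂ, (√‖s‖)⁻¹ *
          exp (-((‖s‖ + ‖t‖) / (2 * ‖s‖)) * v.re ^ 2 - (‖s‖ - ‖t‖) / (2 * ‖s‖) * v.im ^ 2) *
        exp (-((‖s‖ - ‖t‖) / (2 * ‖s‖)) * z.re ^ 2 + v.re / ‖s‖ * z.re
          + (-((‖s‖ + ‖t‖) / (2 * ‖s‖)) * z.im ^ 2 + -v.im / ‖s‖ * z.im))) := by
        simp_rw [norm_Kst_rotate_mul_exp hs (Circle.norm_coe e) h₁ h₂ hv]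
        exact (ofReal_integral_eq_lintegral_ofReal
          ((integrable_exp_quadratic_re_im ha hc _ _).const_mul _)
          (ae_of_all _ fun z => by positivity)).symm
    _ = _ := by
        rw [integral_const_mul, integral_exp_quadratic_re_im ha hc,
          inv_sqrt_mul_gaussian_integrals_eq (norm_nonneg t) hts]

theorem lintegral_norm_Kst_mul_exp_le {s t : ℂ} (hst : ‖t‖ ^ 2 + 1 ≤ ‖s‖ ^ 2) (w : ℂ) :
    ∫⁻ z : ℂ, ENNReal.ofReal (‖Kst s t z w‖ * exp (-(‖z‖ ^ 2 + ‖w‖ ^ 2) / 2))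
      ≤ ENNReal.ofReal (2 * π * √‖s‖ / √(‖s‖ ^ 2 - ‖t‖ ^ 2) *
          exp (-(‖s‖ ^ 2 - ‖t‖ ^ 2 - 1) * ‖w‖ ^ 2 / (2 * ‖s‖ * (‖s‖ + ‖t‖)))) := by
  have hT := norm_nonneg t
  have hts : ‖t‖ < ‖s‖ := by nlinarith [norm_nonneg s]
  have hS : 0 < ‖s‖ := hT.trans_lt hts
  obtain ⟨v, hvw, heq⟩ := lintegral_norm_Kst_mul_exp_eq hts w
  have hw : ‖w‖ ^ 2 = v.re ^ 2 + v.im ^ 2 := by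
    rw [← hvw, Complex.sq_norm, Complex.normSq_apply]; ring
  rw [heq, hw]
  gcongr ENNReal.ofReal (_ * exp ?_)
  have hv_re : (‖s‖ ^ 2 - ‖t‖ ^ 2 - 1) * v.re ^ 2 / (2 * ‖s‖ * (‖s‖ + ‖t‖))
      ≤ (‖s‖ ^ 2 - ‖t‖ ^ 2 - 1) * v.re ^ 2 / (2 * ‖s‖ * (‖s‖ - ‖t‖)) := by
    have := sub_pos.mpr hts
    refine div_le_div_of_nonneg_left (by nlinarith [sq_nonneg v.re]) (by positivity) ?_
    gcongr
    linarith
  calc _ = -((‖s‖ ^ 2 - ‖t‖ ^ 2 - 1) * v.re ^ 2 / (2 * ‖s‖ * (‖s‖ - ‖t‖)))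
        - (‖s‖ ^ 2 - ‖t‖ ^ 2 - 1) * v.im ^ 2 / (2 * ‖s‖ * (‖s‖ + ‖t‖)) := by ring
    _ ≤ -((‖s‖ ^ 2 - ‖t‖ ^ 2 - 1) * v.re ^ 2 / (2 * ‖s‖ * (‖s‖ + ‖t‖)))
        - (‖s‖ ^ 2 - ‖t‖ ^ 2 - 1) * v.im ^ 2 / (2 * ‖s‖ * (‖s‖ + ‖t‖)) := by linarith
    _ = _ := by ring

lemma tendsto_ofReal_mul_exp_mul_norm_sq {E : Type*} [NormedAddCommGroup E] {a : ℝ} (ha : a < 0)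
    (C : ℝ) : Tendsto (fun x : E => ENNReal.ofReal (C * exp (a * ‖x‖ ^ 2)))
      (Bornology.cobounded E) (nhds 0) := by
  have hexp : Tendsto (fun x : E => exp (a * ‖x‖ ^ 2)) (Bornology.cobounded E) (nhds 0) :=
    tendsto_exp_atBot.comp <| Tendsto.const_mul_atTop_of_neg ha <|
      (tendsto_pow_atTop two_ne_zero).comp tendsto_norm_cobounded_atTop
  simpa using ENNReal.tendsto_ofReal (hexp.const_mul C)

theorem stmt16 (s t : ℂ) (hst : ‖s‖ ^ 2 ≥ ‖t‖ ^ 2 + 1) :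
    (∀ w : ℂ,
      (∫⁻ z : ℂ, ENNReal.ofReal (‖Kst s t z w‖ *
          Real.exp (-(‖z‖ ^ 2 + ‖w‖ ^ 2) / 2)))
        ≤ ENNReal.ofReal ((2 * Real.pi * Real.sqrt (‖s‖) /
              Real.sqrt (‖s‖ ^ 2 - ‖t‖ ^ 2)) *
            Real.exp (-(‖s‖ ^ 2 - ‖t‖ ^ 2 - 1) * ‖w‖ ^ 2 /
              (2 * ‖s‖ * (‖s‖ + ‖t‖))))) ∧
    (⨆ w : ℂ, ∫⁻ z : ℂ, ENNReal.ofReal (‖Kst s t z w‖ *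
        Real.exp (-(‖z‖ ^ 2 + ‖w‖ ^ 2) / 2))) < ⊤ ∧
    (‖s‖ ^ 2 > ‖t‖ ^ 2 + 1 →
      Tendsto (fun w : ℂ => ∫⁻ z : ℂ, ENNReal.ofReal (‖Kst s t z w‖ *
          Real.exp (-(‖z‖ ^ 2 + ‖w‖ ^ 2) / 2)))
        (Bornology.cobounded ℂ) (nhds 0)) := by
  have hbound := lintegral_norm_Kst_mul_exp_le hst
  have hS : 0 < ‖s‖ := by nlinarith [norm_nonneg s, norm_nonneg t]
  have hden : 0 < 2 * ‖s‖ * (‖s‖ + ‖t‖) := by positivity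
  refine ⟨hbound, ?_, fun hgt => ?_⟩
  · refine (iSup_le fun w => (hbound w).trans (ENNReal.ofReal_le_ofReal (q :=
      2 * π * √‖s‖ / √(‖s‖ ^ 2 - ‖t‖ ^ 2)) ?_)).trans_lt ENNReal.ofReal_lt_top
    refine mul_le_of_le_one_right (by positivity) (exp_le_one_iff.mpr ?_)
    exact div_nonpos_of_nonpos_of_nonneg (by nlinarith [norm_nonneg w]) hden.le
  · refine tendsto_of_tendsto_of_tendsto_of_le_of_le tendsto_const_nhds ?_ (fun _ => zero_le)
      hbound
    simp_rw [mul_div_right_comm _ (‖_‖ ^ 2)]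
    exact tendsto_ofReal_mul_exp_mul_norm_sq (div_neg_of_neg_of_pos (by linarith) hden) _
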